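/- If a generalized permutation π is irreducible, then every collection of positive reals (λ_α)_{α∈𝒜} with Σ_{i=1}^{l} λ_{π(i)} = Σ_{j=1}^{m} λ_{π(l+j)} is admissible for π. -/

import Mathlib

open Finset

/-- A generalized permutation of type `(l, m)`: a map from positions `1, …, l + m`
(the top line being positions `1, …, l` and the bottom line positions `l+1, …, l+m`)
to an alphabet `A`, such that every letter has exactly two preimages. -/
structure GenPerm (A : Type*) [DecidableEq A] where
  l : ℕ
  m : ℕ
  p : ℕ → A
  double : ∀ a : A, ((Finset.Icc 1 (l + m)).filter (fun i => p i = a)).card = 2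

namespace GenPerm

variable {A : Type*} [DecidableEq A]

/-- Total number of positions, `l + m = 2d`. -/
def size (π : GenPerm A) : ℕ := π.l + π.m

/-- The multiset of letters occupying positions `a, a+1, …, b`. -/
def seg (π : GenPerm A) (a b : ℕ) : Multiset A :=
  (Finset.Icc a b).val.map π.p

/-- `i` and `j` are the two positions of a common letter (i.e. `j = σ(i)` where `σ` is the
fixed-point-free involution associated to `π`). -/
def IsTwin (π : GenPerm A) (i j : ℕ) : Prop :=
  1 ≤ i ∧ i ≤ π.size ∧ 1 ≤ j ∧ j ≤ π.size ∧ i ≠ j ∧ π.p i = π.p j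

/-- The convention: some letter has both occurrences on the top line, and some letter has
both occurrences on the bottom line. -/
def Convention (π : GenPerm A) : Prop :=
  (∃ i j, π.IsTwin i j ∧ i ≤ π.l ∧ j ≤ π.l) ∧
  (∃ i j, π.IsTwin i j ∧ π.l < i ∧ π.l < j)

/-- `π` is reducible: it admits a decomposition with corners `A∪B`, `D∪B`, `A∪C`, `D∪C`
(for disjoint, not all empty, subsets `A,B,C,D` of the alphabet) such that (i) no corner is
empty, or (ii) exactly one corner is empty and it is a left one, or (iii) exactly two corners
are empty and they are both left or both right. -/
def Reducible (π : GenPerm A) : Prop :=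
  ∃ (As Bs Cs Ds : Finset A) (i1 i2 i3 i4 : ℕ),
    Disjoint As Bs ∧ Disjoint As Cs ∧ Disjoint As Ds ∧
    Disjoint Bs Cs ∧ Disjoint Bs Ds ∧ Disjoint Cs Ds ∧
    ¬(As = ∅ ∧ Bs = ∅ ∧ Cs = ∅ ∧ Ds = ∅) ∧
    i1 ≤ i2 ∧ i2 ≤ π.l ∧ π.l ≤ i3 ∧ i3 ≤ i4 ∧ i4 ≤ π.size ∧
    π.seg 1 i1 = As.val + Bs.val ∧
    π.seg (i2 + 1) π.l = Ds.val + Bs.val ∧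
    π.seg (π.l + 1) i3 = As.val + Cs.val ∧
    π.seg (i4 + 1) π.size = Ds.val + Cs.val ∧
    ((π.seg 1 i1 ≠ 0 ∧ π.seg (i2 + 1) π.l ≠ 0 ∧ π.seg (π.l + 1) i3 ≠ 0 ∧
        π.seg (i4 + 1) π.size ≠ 0) ∨
     (π.seg 1 i1 = 0 ∧ π.seg (i2 + 1) π.l ≠ 0 ∧ π.seg (π.l + 1) i3 ≠ 0 ∧
        π.seg (i4 + 1) π.size ≠ 0) ∨
     (π.seg 1 i1 ≠ 0 ∧ π.seg (i2 + 1) π.l ≠ 0 ∧ π.seg (π.l + 1) i3 = 0 ∧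
        π.seg (i4 + 1) π.size ≠ 0) ∨
     (π.seg 1 i1 = 0 ∧ π.seg (i2 + 1) π.l ≠ 0 ∧ π.seg (π.l + 1) i3 = 0 ∧
        π.seg (i4 + 1) π.size ≠ 0) ∨
     (π.seg 1 i1 ≠ 0 ∧ π.seg (i2 + 1) π.l = 0 ∧ π.seg (π.l + 1) i3 ≠ 0 ∧
        π.seg (i4 + 1) π.size = 0))

/-- `π` is irreducible if it is not reducible. -/
def Irreducible (π : GenPerm A) : Prop := ¬ π.Reducible

/-- `π` is strongly irreducible if every decomposition with corners `A∪B`, `D∪B`, `A∪C`,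
`D∪C` (for disjoint subsets) has all four corners empty. -/
def StronglyIrreducible (π : GenPerm A) : Prop :=
  ∀ (As Bs Cs Ds : Finset A) (i1 i2 i3 i4 : ℕ),
    Disjoint As Bs → Disjoint As Cs → Disjoint As Ds →
    Disjoint Bs Cs → Disjoint Bs Ds → Disjoint Cs Ds →
    i1 ≤ i2 → i2 ≤ π.l → π.l ≤ i3 → i3 ≤ i4 → i4 ≤ π.size →
    π.seg 1 i1 = As.val + Bs.val →
    π.seg (i2 + 1) π.l = Ds.val + Bs.val →
    π.seg (π.l + 1) i3 = As.val + Cs.val →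
    π.seg (i4 + 1) π.size = Ds.val + Cs.val →
    (π.seg 1 i1 = 0 ∧ π.seg (i2 + 1) π.l = 0 ∧ π.seg (π.l + 1) i3 = 0 ∧
      π.seg (i4 + 1) π.size = 0)

/-- `Σ_{j=1}^{k} ζ_{π(j)}` (partial sum along the top line). -/
noncomputable def topSum (π : GenPerm A) (ζ : A → ℂ) (k : ℕ) : ℂ := ∑ j ∈ Finset.Icc 1 k, ζ (π.p j)

/-- `Σ_{j=1}^{k} ζ_{π(l+j)}` (partial sum along the bottom line). -/
noncomputable def botSum (π : GenPerm A) (ζ : A → ℂ) (k : ℕ) : ℂ := ∑ j ∈ Finset.Icc 1 k, ζ (π.p (π.l + j))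

/-- Real version of `topSum`. -/
noncomputable def topSumR (π : GenPerm A) (τ : A → ℝ) (k : ℕ) : ℝ := ∑ j ∈ Finset.Icc 1 k, τ (π.p j)

/-- Real version of `botSum`. -/
noncomputable def botSumR (π : GenPerm A) (τ : A → ℝ) (k : ℕ) : ℝ := ∑ j ∈ Finset.Icc 1 k, τ (π.p (π.l + j))

/-- `ζ` is a suspension data for `π`. -/
def IsSuspension (π : GenPerm A) (ζ : A → ℂ) : Prop :=
  (∀ a, 0 < (ζ a).re) ∧
  (∀ i, 1 ≤ i → i ≤ π.l - 1 → 0 < (π.topSum ζ i).im) ∧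
  (∀ i, 1 ≤ i → i ≤ π.m - 1 → (π.botSum ζ i).im < 0) ∧
  π.topSum ζ π.l = π.botSum ζ π.m

/-- `τ` is a pseudo-suspension for `π`. -/
def IsPseudoSusp (π : GenPerm A) (τ : A → ℝ) : Prop :=
  (∀ k, 1 ≤ k → k ≤ π.l → 0 ≤ π.topSumR τ k) ∧
  (∀ k, 1 ≤ k → k ≤ π.m → π.botSumR τ k ≤ 0) ∧
  π.topSumR τ π.l = 0 ∧ π.botSumR τ π.m = 0

/-- `τ` is a strict pseudo-suspension for `π`: all the inequalities are strict except the
extremal ones. -/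
def IsStrictPseudoSusp (π : GenPerm A) (τ : A → ℝ) : Prop :=
  π.IsPseudoSusp τ ∧
  (∀ k, 1 ≤ k → k ≤ π.l - 1 → 0 < π.topSumR τ k) ∧
  (∀ k, 1 ≤ k → k ≤ π.m - 1 → π.botSumR τ k < 0)

/-- Number of occurrences of the letter `a` on the top line; so `a ∈ 𝒜₀ ↔ topCount = 2`,
`a ∈ 𝒜₁ ↔ topCount = 0`, and `a ∈ 𝒜₀₁ ↔ topCount = 1`. -/
def topCount (π : GenPerm A) (a : A) : ℕ :=
  ((Finset.Icc 1 π.l).filter (fun i => π.p i = a)).card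

end GenPerm

/-- Case (1) of dynamical reducibility of the length data. -/
def DynCond1 {A : Type*} [Fintype A] [DecidableEq A] (π : GenPerm A) : Prop :=
  (∃ (As : Finset A) (i1 i3 : ℕ), As.Nonempty ∧ (∀ a ∈ As, π.topCount a = 1) ∧
     i1 ≤ π.l ∧ π.l ≤ i3 ∧ i3 ≤ π.size ∧
     π.seg 1 i1 = As.val ∧ π.seg (π.l + 1) i3 = As.val) ∨
  (∃ (Ds : Finset A) (i2 i4 : ℕ), Ds.Nonempty ∧ (∀ a ∈ Ds, π.topCount a = 1) ∧
     i2 ≤ π.l ∧ π.l ≤ i4 ∧ i4 ≤ π.size ∧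
     π.seg (i2 + 1) π.l = Ds.val ∧ π.seg (i4 + 1) π.size = Ds.val) ∨
  (∃ (As Ds : Finset A) (i1 i2 i3 i4 : ℕ),
     (∀ a ∈ As, π.topCount a = 1) ∧ (∀ a ∈ Ds, π.topCount a = 1) ∧
     i1 ≤ i2 ∧ i2 ≤ π.l ∧ π.l ≤ i3 ∧ i3 ≤ i4 ∧ i4 ≤ π.size ∧
     π.seg 1 i1 = As.val + (Finset.univ.filter (fun a => π.topCount a = 2)).val ∧
     π.seg (i2 + 1) π.l = Ds.val + (Finset.univ.filter (fun a => π.topCount a = 2)).val ∧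
     π.seg (π.l + 1) i3 = As.val + (Finset.univ.filter (fun a => π.topCount a = 0)).val ∧
     π.seg (i4 + 1) π.size = Ds.val + (Finset.univ.filter (fun a => π.topCount a = 0)).val)

/-- Case (2) of dynamical reducibility of the length data `lam` (the version where the
distinguished letter `α₀` sits on the bottom line). -/
def DynCond2raw {A : Type*} [DecidableEq A] (π : GenPerm A) (lam : A → ℝ) : Prop :=
  ∃ (As Bs Cs Ds : Finset A) (i1 i2 i3 i4 : ℕ) (a0 : A),
    (∀ a ∈ As, π.topCount a = 1) ∧ (∀ a ∈ Ds, π.topCount a = 1) ∧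
    Bs.Nonempty ∧ (∀ a ∈ Bs, π.topCount a = 2) ∧ (∀ a ∈ Cs, π.topCount a = 0) ∧
    i1 ≤ i2 ∧ i2 ≤ π.l ∧ π.l ≤ i3 ∧ i3 ≤ i4 ∧ i4 ≤ π.size ∧
    π.seg 1 i1 = As.val + Bs.val ∧
    π.seg (i2 + 1) π.l = Bs.val + Ds.val ∧
    π.seg (π.l + 1) i3 = As.val + Cs.val ∧
    π.seg (i4 + 1) π.size = Cs.val + Ds.val ∧
    i3 + 1 < i4 ∧ π.p (i3 + 1) = a0 ∧ π.p i4 = a0 ∧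
    (∑ a ∈ Cs, lam a) ≤ (∑ a ∈ Bs, lam a) ∧
    (∑ a ∈ Bs, lam a) ≤ lam a0 + ∑ a ∈ Cs, lam a

/-- Case (2) of dynamical reducibility of the length data `lam`, after exchanging the top
and the bottom lines of `π` (so the distinguished letter `α₀` sits on the top line). -/
def DynCond2swap {A : Type*} [DecidableEq A] (π : GenPerm A) (lam : A → ℝ) : Prop :=
  ∃ (As Bs Cs Ds : Finset A) (j1 j2 j3 j4 : ℕ) (a0 : A),
    (∀ a ∈ As, π.topCount a = 1) ∧ (∀ a ∈ Ds, π.topCount a = 1) ∧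
    Bs.Nonempty ∧ (∀ a ∈ Bs, π.topCount a = 0) ∧ (∀ a ∈ Cs, π.topCount a = 2) ∧
    j1 ≤ j2 ∧ j2 ≤ π.m ∧ j3 ≤ j4 ∧ j4 ≤ π.l ∧
    π.seg (π.l + 1) (π.l + j1) = As.val + Bs.val ∧
    π.seg (π.l + j2 + 1) π.size = Bs.val + Ds.val ∧
    π.seg 1 j3 = As.val + Cs.val ∧
    π.seg (j4 + 1) π.l = Cs.val + Ds.val ∧
    j3 + 1 < j4 ∧ π.p (j3 + 1) = a0 ∧ π.p j4 = a0 ∧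
    (∑ a ∈ Cs, lam a) ≤ (∑ a ∈ Bs, lam a) ∧
    (∑ a ∈ Bs, lam a) ≤ lam a0 + ∑ a ∈ Cs, lam a

/-- The length data `lam` is admissible for `π`. -/
def Admissible {A : Type*} [Fintype A] [DecidableEq A] (π : GenPerm A) (lam : A → ℝ) : Prop :=
  ¬(DynCond1 π ∨ DynCond2raw π lam ∨ DynCond2swap π lam)

/-!
Each configuration excluded by admissibility already yields a decomposition that makes `π`
reducible. In case (2) the two occurrences of `α₀` at the ends of the bottom middle part are
moved into the two bottom corners (the top ones after exchanging the lines), so that all four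
corners become nonempty. In case (1) the given corners work as they stand unless `𝒜₀ = ∅`; since
the lines have equal length, `Σ_{𝒜₀} λ = Σ_{𝒜₁} λ`, so then `𝒜₁ = ∅` as well and one falls back
on the nonempty pair of left or right corners, or on the two whole lines.
-/

namespace GenPerm

variable {A : Type*} [DecidableEq A] (π : GenPerm A)

lemma mem_seg {a : A} {x y : ℕ} : a ∈ π.seg x y ↔ ∃ i, x ≤ i ∧ i ≤ y ∧ π.p i = a := by
  simp [seg, and_assoc]

lemma seg_eq_zero {x y : ℕ} (h : y < x) : π.seg x y = 0 := by
  simp [seg, Icc_eq_empty_of_lt h]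

lemma seg_add_one_right {x y : ℕ} (h : x ≤ y + 1) :
    π.seg x (y + 1) = π.p (y + 1) ::ₘ π.seg x y := by
  rw [seg, seg, ← insert_Icc_right_eq_Icc_add_one h, insert_val_of_notMem (by simp),
    Multiset.map_cons]

lemma seg_eq_cons_seg_add_one {x y : ℕ} (h : x ≤ y) :
    π.seg x y = π.p x ::ₘ π.seg (x + 1) y := by
  rw [seg, seg, ← insert_Icc_add_one_left_eq_Icc h, insert_val_of_notMem (by simp),
    Multiset.map_cons]

lemma count_seg (a : A) (x y : ℕ) :
    (π.seg x y).count a = ((Icc x y).filter (fun i => π.p i = a)).card := by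
  rw [seg, Multiset.count_map,
    Multiset.filter_congr (fun i _ => (eq_comm : a = π.p i ↔ π.p i = a))]
  rfl

lemma no_three_occurrences {a : A} {x y z : ℕ} (hx : 1 ≤ x) (hxy : x < y) (hyz : y < z)
    (hz : z ≤ π.size) (ex : π.p x = a) (ey : π.p y = a) (ez : π.p z = a) : False := by
  replace hz : z ≤ π.l + π.m := hz
  have h3 : 2 < ((Icc 1 (π.l + π.m)).filter (fun i => π.p i = a)).card :=
    two_lt_card.2 ⟨x, by simp [ex]; omega, y, by simp [ey]; omega, z,
      by simp [ez]; omega, by omega, by omega, by omega⟩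
  exact (π.double a ▸ h3).false

lemma topCount_le_two (a : A) : π.topCount a ≤ 2 :=
  π.double a ▸ card_le_card
    (filter_subset_filter _ (Icc_subset_Icc_right (Nat.le_add_right _ _)))

lemma topCount_add_card_filter_bottom (a : A) :
    π.topCount a + ((Icc (π.l + 1) π.size).filter (fun i => π.p i = a)).card = 2 := by
  have hdisj : Disjoint (Icc 1 π.l) (Icc (π.l + 1) π.size) := by
    simp [disjoint_left]; omega
  have hunion : Icc 1 π.l ∪ Icc (π.l + 1) π.size = Icc 1 (π.l + π.m) := by
    ext i; simp only [mem_union, mem_Icc, size]; omega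
  rw [topCount, ← card_union_of_disjoint (disjoint_filter_filter hdisj),
    ← filter_union, hunion, π.double]

lemma topCount_eq_two {a : A} {x y : ℕ} (hx : 1 ≤ x) (hxy : x < y) (hy : y ≤ π.l)
    (ex : π.p x = a) (ey : π.p y = a) : π.topCount a = 2 := by
  have h1 : 1 < π.topCount a :=
    one_lt_card.2 ⟨x, by simp [ex]; omega, y, by simp [ey]; omega, by omega⟩
  have := π.topCount_le_two a
  omega

lemma topCount_eq_zero {a : A} {x y : ℕ} (hx : π.l < x) (hxy : x < y) (hy : y ≤ π.size)
    (ex : π.p x = a) (ey : π.p y = a) : π.topCount a = 0 := by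
  refine card_eq_zero.2 (filter_eq_empty_iff.2 fun z hz ez => ?_)
  rw [mem_Icc] at hz
  exact π.no_three_occurrences (by omega) (by omega) hxy hy ez ex ey

lemma topSumR_eq_sum_topCount [Fintype A] (τ : A → ℝ) :
    π.topSumR τ π.l = ∑ a, (π.topCount a : ℝ) * τ a := by
  rw [topSumR, ← sum_fiberwise_of_maps_to (fun i _ => mem_univ (π.p i))]
  refine sum_congr rfl fun a _ => ?_
  rw [sum_congr rfl fun i hi => by rw [(mem_filter.1 hi).2], sum_const,
    nsmul_eq_mul, topCount]

lemma botSumR_eq_sum_topCount [Fintype A] (τ : A → ℝ) :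
    π.botSumR τ π.m = ∑ a, (2 - π.topCount a : ℝ) * τ a := by
  have hshift : π.botSumR τ π.m = ∑ i ∈ Icc (π.l + 1) π.size, τ (π.p i) := by
    rw [botSumR, size, ← image_add_left_Icc, sum_image (by simp)]
  rw [hshift, ← sum_fiberwise_of_maps_to (fun i _ => mem_univ (π.p i))]
  refine sum_congr rfl fun a _ => ?_
  rw [sum_congr rfl fun i hi => by rw [(mem_filter.1 hi).2], sum_const,
    nsmul_eq_mul]
  have hcard := π.topCount_add_card_filter_bottom a
  congr 1
  rw [eq_sub_iff_add_eq', ← Nat.cast_add, hcard, Nat.cast_ofNat]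

/-- The two lines have equal length and each letter of `𝒜₀₁` contributes once to each of them,
so `𝒜₀` and `𝒜₁` have equal total length. -/
lemma sum_topCount_two_eq_sum_topCount_zero [Fintype A] {lam : A → ℝ}
    (hsum : π.topSumR lam π.l = π.botSumR lam π.m) :
    ∑ a ∈ univ.filter (fun a => π.topCount a = 2), lam a =
      ∑ a ∈ univ.filter (fun a => π.topCount a = 0), lam a := by
  have hcases : ∀ a, (π.topCount a - 1 : ℝ) * lam a =
      (if π.topCount a = 2 then lam a else 0) - (if π.topCount a = 0 then lam a else 0) := by
    intro a
    rcases (by have := π.topCount_le_two a; omega :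
      π.topCount a = 0 ∨ π.topCount a = 1 ∨ π.topCount a = 2) with h | h | h <;>
      norm_num [h]
  have hzero : ∑ a, (π.topCount a - 1 : ℝ) * lam a = 0 := by
    rw [π.topSumR_eq_sum_topCount, π.botSumR_eq_sum_topCount] at hsum
    have : ∑ a, (π.topCount a - 1 : ℝ) * lam a =
        (∑ a, (π.topCount a : ℝ) * lam a - ∑ a, (2 - π.topCount a : ℝ) * lam a) / 2 := by
      rw [← sum_sub_distrib, sum_div]
      exact sum_congr rfl fun a _ => by ring
    rw [this, hsum, sub_self, zero_div]
  rw [sum_congr rfl fun a _ => hcases a, sum_sub_distrib, ← sum_filter,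
    ← sum_filter] at hzero
  linarith

lemma filter_topCount_two_nonempty_iff [Fintype A] {lam : A → ℝ} (hpos : ∀ a, 0 < lam a)
    (hsum : π.topSumR lam π.l = π.botSumR lam π.m) :
    (univ.filter (fun a => π.topCount a = 2)).Nonempty ↔
      (univ.filter (fun a => π.topCount a = 0)).Nonempty := by
  have hsums := π.sum_topCount_two_eq_sum_topCount_zero hsum
  constructor <;> intro h <;> by_contra h' <;> rw [not_nonempty_iff_eq_empty] at h'
  · rw [h', sum_empty] at hsums
    exact (sum_pos (fun a _ => hpos a) h).ne' hsums
  · rw [h', sum_empty] at hsums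
    exact (sum_pos (fun a _ => hpos a) h).ne hsums

lemma disjoint_of_topCount {s t : Finset A} {u v : ℕ} (hs : ∀ a ∈ s, π.topCount a = u)
    (ht : ∀ a ∈ t, π.topCount a = v) (huv : u ≠ v) : Disjoint s t :=
  disjoint_left.2 fun a has hat => huv ((hs a has).symm.trans (ht a hat))

lemma reducible_of_left_corners {As : Finset A} {i1 i3 : ℕ} (hA : As.Nonempty)
    (h1 : i1 ≤ π.l) (h3 : π.l ≤ i3) (h3s : i3 ≤ π.size)
    (e1 : π.seg 1 i1 = As.val) (e3 : π.seg (π.l + 1) i3 = As.val) : π.Reducible := by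
  have hAv : As.val ≠ 0 := by simpa [nonempty_iff_ne_empty] using hA
  have hTR : π.seg (π.l + 1) π.l = 0 := π.seg_eq_zero (Nat.lt_succ_self _)
  have hBR : π.seg (π.size + 1) π.size = 0 := π.seg_eq_zero (Nat.lt_succ_self _)
  refine ⟨As, ∅, ∅, ∅, i1, π.l, i3, π.size, by simp, by simp, by simp, by simp, by simp,
    by simp, fun h => hA.ne_empty h.1, h1, le_rfl, h3, h3s, le_rfl, by simpa using e1,
    by simpa using hTR, by simpa using e3, by simpa using hBR, ?_⟩
  exact Or.inr <| Or.inr <| Or.inr <| Or.inr ⟨e1 ▸ hAv, hTR, e3 ▸ hAv, hBR⟩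

lemma reducible_of_right_corners {Ds : Finset A} {i2 i4 : ℕ} (hD : Ds.Nonempty)
    (h2 : i2 ≤ π.l) (h4 : π.l ≤ i4) (h4s : i4 ≤ π.size)
    (e2 : π.seg (i2 + 1) π.l = Ds.val) (e4 : π.seg (i4 + 1) π.size = Ds.val) :
    π.Reducible := by
  have hDv : Ds.val ≠ 0 := by simpa [nonempty_iff_ne_empty] using hD
  have hTL : π.seg 1 0 = 0 := π.seg_eq_zero Nat.zero_lt_one
  have hBL : π.seg (π.l + 1) π.l = 0 := π.seg_eq_zero (Nat.lt_succ_self _)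
  refine ⟨∅, ∅, ∅, Ds, 0, i2, π.l, i4, by simp, by simp, by simp, by simp, by simp,
    by simp, fun h => hD.ne_empty h.2.2.2, Nat.zero_le _, h2, le_rfl, h4, h4s,
    by simpa using hTL, by simpa using e2, by simpa using hBL, by simpa using e4, ?_⟩
  exact Or.inr <| Or.inr <| Or.inr <| Or.inl ⟨hTL, e2 ▸ hDv, hBL, e4 ▸ hDv⟩

lemma reducible_of_forall_topCount_eq_one [Fintype A] (h : ∀ a, π.topCount a = 1) :
    π.Reducible := by
  have htop : π.seg 1 π.l = univ.val :=
    Multiset.ext.2 fun a => by rw [count_seg, Multiset.count_univ]; exact h a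
  have hbot : π.seg (π.l + 1) π.size = univ.val :=
    Multiset.ext.2 fun a => by
      have := π.topCount_add_card_filter_bottom a
      have := h a
      rw [count_seg, Multiset.count_univ]
      omega
  exact π.reducible_of_left_corners ⟨π.p 0, mem_univ _⟩ le_rfl (Nat.le_add_right _ _)
    le_rfl htop hbot

lemma reducible_of_corners {As Bs Cs Ds : Finset A} {i1 i2 i3 i4 : ℕ}
    (hA : ∀ a ∈ As, π.topCount a = 1) (hB : ∀ a ∈ Bs, π.topCount a = 2)
    (hC : ∀ a ∈ Cs, π.topCount a = 0) (hD : ∀ a ∈ Ds, π.topCount a = 1)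
    (h12 : i1 ≤ i2) (h2 : i2 ≤ π.l) (h3 : π.l ≤ i3) (h34 : i3 ≤ i4) (h4 : i4 ≤ π.size)
    (e1 : π.seg 1 i1 = As.val + Bs.val) (e2 : π.seg (i2 + 1) π.l = Ds.val + Bs.val)
    (e3 : π.seg (π.l + 1) i3 = As.val + Cs.val) (e4 : π.seg (i4 + 1) π.size = Ds.val + Cs.val)
    (hAB : As.Nonempty ∨ Bs.Nonempty) (hDB : Ds.Nonempty ∨ Bs.Nonempty)
    (hAC : As.Nonempty ∨ Cs.Nonempty) (hDC : Ds.Nonempty ∨ Cs.Nonempty) :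
    π.Reducible := by
  have hAD : Disjoint As Ds := by
    refine disjoint_left.2 fun a haA haD => ?_
    obtain ⟨x, hx1, hx, ex⟩ := π.mem_seg.1 (e1 ▸ Multiset.mem_add.2 (Or.inl haA))
    obtain ⟨y, hy2, hy, ey⟩ := π.mem_seg.1 (e2 ▸ Multiset.mem_add.2 (Or.inl haD))
    obtain ⟨z, hz3, hz, ez⟩ := π.mem_seg.1 (e3 ▸ Multiset.mem_add.2 (Or.inl haA))
    exact π.no_three_occurrences hx1 (by omega) (by omega) (by omega) ex ey ez
  have hne {s t : Finset A} (h : s.Nonempty ∨ t.Nonempty) : s.val + t.val ≠ 0 := by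
    simpa [nonempty_iff_ne_empty, or_iff_not_and_not] using h
  refine ⟨As, Bs, Cs, Ds, i1, i2, i3, i4, π.disjoint_of_topCount hA hB (by decide),
    π.disjoint_of_topCount hA hC (by decide), hAD, π.disjoint_of_topCount hB hC (by decide),
    π.disjoint_of_topCount hB hD (by decide), π.disjoint_of_topCount hC hD (by decide),
    fun ⟨hA0, hB0, _, _⟩ => by simp [hA0, hB0] at hAB, h12, h2, h3, h34, h4, e1, e2, e3, e4,
    Or.inl ⟨e1 ▸ hne hAB, e2 ▸ hne hDB, e3 ▸ hne hAC, e4 ▸ hne hDC⟩⟩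

lemma seg_insert_twin {As Cs Ds : Finset A} {s y z e : ℕ} {a0 : A} (hs : 1 ≤ s)
    (hsy : s ≤ y + 1) (hyz : y + 1 < z) (hze : z ≤ e) (he : e ≤ π.size)
    (hy : π.p (y + 1) = a0) (hz : π.p z = a0)
    (hL : π.seg s y = As.val + Cs.val) (hR : π.seg (z + 1) e = Cs.val + Ds.val) :
    π.seg s (y + 1) = As.val + (insert a0 Cs).val ∧
      π.seg (z - 1 + 1) e = Ds.val + (insert a0 Cs).val := by
  have ha0 : a0 ∉ Cs := fun ha0 => by
    obtain ⟨x, hx1, hx, ex⟩ := π.mem_seg.1 (hL ▸ Multiset.mem_add.2 (Or.inr ha0))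
    exact π.no_three_occurrences (by omega) (by omega) hyz (by omega) ex hy hz
  rw [insert_val_of_notMem ha0, Multiset.add_cons, Multiset.add_cons,
    Nat.sub_add_cancel (by omega), π.seg_add_one_right hsy, π.seg_eq_cons_seg_add_one hze,
    hL, hR, hy, hz, add_comm Ds.val]
  exact ⟨rfl, rfl⟩

end GenPerm

section

variable {A : Type*} [DecidableEq A] {π : GenPerm A}

lemma DynCond1.reducible [Fintype A] {lam : A → ℝ} (hpos : ∀ a, 0 < lam a)
    (hsum : π.topSumR lam π.l = π.botSumR lam π.m) (hd : DynCond1 π) : π.Reducible := by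
  rcases hd with ⟨As, i1, i3, hA, -, h1, h3, h3s, e1, e3⟩ |
    ⟨Ds, i2, i4, hD, -, h2, h4, h4s, e2, e4⟩ |
    ⟨As, Ds, i1, i2, i3, i4, hA, hD, h12, h2, h3, h34, h4, e1, e2, e3, e4⟩
  · exact π.reducible_of_left_corners hA h1 h3 h3s e1 e3
  · exact π.reducible_of_right_corners hD h2 h4 h4s e2 e4
  set B0 := univ.filter (fun a => π.topCount a = 2)
  set C0 := univ.filter (fun a => π.topCount a = 0)
  have hB : ∀ a ∈ B0, π.topCount a = 2 := fun a ha => (mem_filter.1 ha).2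
  have hC : ∀ a ∈ C0, π.topCount a = 0 := fun a ha => (mem_filter.1 ha).2
  by_cases hB0 : B0.Nonempty
  · have hC0 := (π.filter_topCount_two_nonempty_iff hpos hsum).1 hB0
    exact π.reducible_of_corners hA hB hC hD h12 h2 h3 h34 h4 e1 e2 e3 e4
      (Or.inr hB0) (Or.inr hB0) (Or.inr hC0) (Or.inr hC0)
  have hC0 : C0 = ∅ := not_nonempty_iff_eq_empty.1
    (mt (π.filter_topCount_two_nonempty_iff hpos hsum).2 hB0)
  rw [not_nonempty_iff_eq_empty] at hB0
  simp only [hB0, hC0, empty_val, add_zero] at e1 e2 e3 e4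
  rcases As.eq_empty_or_nonempty with rfl | hAne
  · rcases Ds.eq_empty_or_nonempty with rfl | hDne
    · refine π.reducible_of_forall_topCount_eq_one fun a => ?_
      have h2 : π.topCount a ≠ 2 := fun h2 =>
        notMem_empty a (hB0 ▸ mem_filter.2 ⟨mem_univ a, h2⟩)
      have h0 : π.topCount a ≠ 0 := fun h0 =>
        notMem_empty a (hC0 ▸ mem_filter.2 ⟨mem_univ a, h0⟩)
      have := π.topCount_le_two a
      omega
    · exact π.reducible_of_right_corners hDne h2 (h3.trans h34) h4 e2 e4
  · exact π.reducible_of_left_corners hAne (h12.trans h2) h3 (h34.trans h4) e1 e3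

lemma DynCond2raw.reducible {lam : A → ℝ} (hd : DynCond2raw π lam) : π.Reducible := by
  obtain ⟨As, Bs, Cs, Ds, i1, i2, i3, i4, a0, hA, hD, hBne, hB, hC, h12, h2, h3, h34, h4,
    e1, e2, e3, e4, hlt, ha0, ha0', -, -⟩ := hd
  obtain ⟨e3', e4'⟩ := π.seg_insert_twin (Nat.le_add_left _ _) (by omega) hlt h4 le_rfl
    ha0 ha0' e3 e4
  have hbot : π.topCount a0 = 0 := π.topCount_eq_zero (by omega) hlt h4 ha0 ha0'
  exact π.reducible_of_corners hA hB ((forall_mem_insert _ _ _).2 ⟨hbot, hC⟩) hD h12 h2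
    (by omega) (by omega) (by omega) e1 (e2.trans (add_comm _ _)) e3' e4'
    (Or.inr hBne) (Or.inr hBne) (Or.inr ⟨a0, mem_insert_self _ _⟩)
    (Or.inr ⟨a0, mem_insert_self _ _⟩)

lemma DynCond2swap.reducible {lam : A → ℝ} (hd : DynCond2swap π lam) : π.Reducible := by
  obtain ⟨As, Bs, Cs, Ds, j1, j2, j3, j4, a0, hA, hD, hBne, hB, hC, h12, h2, h34, h4,
    e1, e2, e3, e4, hlt, ha0, ha0', -, -⟩ := hd
  obtain ⟨e3', e4'⟩ := π.seg_insert_twin le_rfl (by omega) hlt h4 (Nat.le_add_right _ _)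
    ha0 ha0' e3 e4
  have htop : π.topCount a0 = 2 := π.topCount_eq_two (by omega) hlt h4 ha0 ha0'
  exact π.reducible_of_corners hA ((forall_mem_insert _ _ _).2 ⟨htop, hC⟩) hB hD
    (by omega) (by omega) (Nat.le_add_right _ _) (by omega) (Nat.add_le_add_left h2 _)
    e3' e4' e1 (e2.trans (add_comm _ _))
    (Or.inr ⟨a0, mem_insert_self _ _⟩) (Or.inr ⟨a0, mem_insert_self _ _⟩)
    (Or.inr hBne) (Or.inr hBne)

end

/-- If `π` is irreducible then every positive length data with equal top
and bottom sums is admissible for `π`. -/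
theorem irreducible_admissible {A : Type*} [Fintype A] [DecidableEq A] (π : GenPerm A)
    (h : π.Irreducible) (lam : A → ℝ) (hpos : ∀ a, 0 < lam a)
    (hsum : π.topSumR lam π.l = π.botSumR lam π.m) :
    Admissible π lam := by
  rintro (hd | hd | hd)
  · exact h (hd.reducible hpos hsum)
  · exact h hd.reducible
  · exact h hd.reducible
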